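/- arXiv:1607.03614 — 4 statements merged into one kernel-verified Lean document; each statement's English description precedes it below -/
import Mathlib

section
/- Let f : [0,T] → ℝ be absolutely continuous and let A ⊂ ℝ have Lebesgue measure zero. Then the set {t ∈ [0,T] : f(t) ∈ A and f'(t) exists and f'(t) ≠ 0} has Lebesgue measure zero. -/
open MeasureTheory Set

/-- A function close enough to a nonzero linear map on a set is injective there. -/
lemma injOn_of_approx_1d {f : ℝ → ℝ} {d : ℝ} {P : Set ℝ} {c : NNReal}
    (h : ApproximatesLinearOn f ((1 : ℝ →L[ℝ] ℝ).smulRight d) P c) (hc : (c : ℝ) < |d|) :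
    Set.InjOn f P := by
  intro x hx y hy hxy
  by_contra hne
  have H := h x hx y hy
  simp only [ContinuousLinearMap.smulRight_apply, ContinuousLinearMap.one_apply,
    smul_eq_mul, hxy, sub_self, zero_sub, norm_neg, Real.norm_eq_abs, abs_mul] at H
  have hxy0 : 0 < |x - y| := abs_pos.mpr (sub_ne_zero.mpr hne)
  have : |d| ≤ (c : ℝ) := le_of_mul_le_mul_right (by linarith [H]) hxy0
  linarith

/-- If `f` is absolutely continuous on `[0,T]` (represented as the integral of an
integrable function `g`) and `A` has Lebesgue measure zero, then the set of times
`t ∈ [0,T]` at which `f t ∈ A`, the derivative of `f` exists and is nonzero, has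
Lebesgue measure zero. -/
theorem zero_time_in_null_set
    (T : ℝ) (hT : 0 ≤ T) (f g : ℝ → ℝ)
    (hg : IntervalIntegrable g volume 0 T)
    (hf : ∀ t ∈ Icc (0:ℝ) T, f t = f 0 + ∫ s in (0:ℝ)..t, g s)
    (A : Set ℝ) (hA : MeasurableSet A) (hA0 : volume A = 0) :
    volume {t ∈ Icc (0:ℝ) T | f t ∈ A ∧ ∃ d : ℝ, HasDerivAt f d t ∧ d ≠ 0} = 0 := by
  -- A continuous representative of `f` on all of `ℝ`
  set F : ℝ → ℝ := fun t => f 0 + ∫ s in (0:ℝ)..(max 0 (min t T)), g s with hF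
  have hclamp : Continuous fun t : ℝ => max 0 (min t T) :=
    continuous_const.max (continuous_id.min continuous_const)
  have hmem : ∀ t : ℝ, max 0 (min t T) ∈ Set.uIcc (0:ℝ) T := by
    intro t
    rw [Set.uIcc_of_le hT]
    constructor
    · exact le_max_left _ _
    · exact max_le hT (min_le_right _ _)
  have hprim : ContinuousOn (fun b => ∫ x in (0:ℝ)..b, g x) (Set.uIcc (0:ℝ) T) :=
    intervalIntegral.continuousOn_primitive_interval' hg Set.left_mem_uIcc
  have hFcont : Continuous F := by
    apply continuous_const.add
    exact hprim.comp_continuous hclamp hmem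
  have hFf : ∀ t ∈ Icc (0:ℝ) T, F t = f t := by
    intro t ht
    have h1 : max 0 (min t T) = t := by
      rw [min_eq_left ht.2, max_eq_right ht.1]
    rw [hF]
    simp only [h1]
    exact (hf t ht).symm
  -- The measurable superset
  set S : Set ℝ := (Icc (0:ℝ) T ∩ F ⁻¹' A) ∩
      ({x | DifferentiableAt ℝ f x} ∩ {x | deriv f x ≠ 0}) with hS
  have hSmeas : MeasurableSet S := by
    apply MeasurableSet.inter
    · exact (measurableSet_Icc.inter (hFcont.measurable hA))
    · exact (measurableSet_of_differentiableAt ℝ f).inter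
        ((measurable_deriv f) (measurableSet_singleton 0).compl)
  have hsub : {t ∈ Icc (0:ℝ) T | f t ∈ A ∧ ∃ d : ℝ, HasDerivAt f d t ∧ d ≠ 0} ⊆ S := by
    rintro t ⟨ht, hfA, d, hd, hd0⟩
    refine ⟨⟨ht, ?_⟩, hd.differentiableAt, ?_⟩
    · show F t ∈ A
      rw [hFf t ht]; exact hfA
    · show deriv f t ≠ 0
      rw [hd.deriv]; exact hd0
  refine measure_mono_null hsub ?_
  -- the derivative as a continuous linear map
  set f' : ℝ → ℝ →L[ℝ] ℝ := fun x => (1 : ℝ →L[ℝ] ℝ).smulRight (deriv f x) with hf'def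
  have hf' : ∀ x ∈ S, HasFDerivWithinAt f (f' x) S x := by
    intro x hx
    exact (hx.2.1.hasDerivAt.hasFDerivAt).hasFDerivWithinAt
  have himg : ∀ P : Set ℝ, P ⊆ S → f '' P ⊆ A := by
    rintro P hP y ⟨x, hx, rfl⟩
    have hxS := hP hx
    have : F x ∈ A := hxS.1.2
    rwa [hFf x hxS.1.1] at this
  -- choose the approximation accuracy
  set r : (ℝ →L[ℝ] ℝ) → NNReal := fun B => if B 1 = 0 then 1 else ‖B 1‖₊ / 2 with hr
  have hrpos : ∀ B, r B ≠ 0 := by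
    intro B
    show (if B 1 = 0 then 1 else ‖B 1‖₊ / 2) ≠ 0
    split_ifs with h
    · exact one_ne_zero
    · exact div_ne_zero (nnnorm_ne_zero_iff.mpr h) two_ne_zero
  rcases Set.eq_empty_or_nonempty S with hemp | hne
  · rw [hemp]; exact measure_empty
  obtain ⟨t, B, t_disj, t_meas, t_cover, ht_approx, ht_eq⟩ :=
    exists_partition_approximatesLinearOn_of_hasFDerivWithinAt f S f' hf' r hrpos
  have key : ∀ n, volume (S ∩ t n) = 0 := by
    intro n
    obtain ⟨y, hyS, hBy⟩ := ht_eq hne n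
    have hdy : deriv f y ≠ 0 := hyS.2.2
    have hB1 : B n 1 = deriv f y := by
      rw [hBy, hf'def]; simp
    have hinj : Set.InjOn f (S ∩ t n) := by
      apply injOn_of_approx_1d (d := deriv f y)
      · have : B n = (1 : ℝ →L[ℝ] ℝ).smulRight (deriv f y) := by
          rw [hBy, hf'def]
        rw [← this]
        exact ht_approx n
      · rw [hr]
        simp only [hB1, if_neg hdy]
        have h2 : ((‖deriv f y‖₊ / 2 : NNReal) : ℝ) = |deriv f y| / 2 := by
          rw [NNReal.coe_div, coe_nnnorm, Real.norm_eq_abs]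
          norm_num
        rw [h2]
        have : 0 < |deriv f y| := abs_pos.mpr hdy
        linarith
    have hfd : ∀ x ∈ S ∩ t n, HasFDerivWithinAt f (f' x) (S ∩ t n) x :=
      fun x hx => (hf' x hx.1).mono Set.inter_subset_left
    have hle := lintegral_abs_det_fderiv_le_addHaar_image volume
      (hSmeas.inter (t_meas n)) hfd hinj
    have himg0 : volume (f '' (S ∩ t n)) = 0 :=
      measure_mono_null (himg _ Set.inter_subset_left) hA0
    rw [himg0] at hle
    have hint0 : ∫⁻ x in S ∩ t n, ENNReal.ofReal |(f' x).det| = 0 := le_zero_iff.mp hle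
    -- the integrand is positive on S
    have hmeas_int : Measurable fun x => ENNReal.ofReal |(f' x).det| := by
      have : ∀ x, (f' x).det = deriv f x := fun x =>
        ContinuousLinearMap.det_toSpanSingleton (deriv f x)
      simp only [this]
      exact ((measurable_deriv f).abs).ennreal_ofReal
    have := (lintegral_eq_zero_iff hmeas_int).mp hint0
    rw [Filter.EventuallyEq, ae_restrict_iff' (hSmeas.inter (t_meas n))] at this
    have hcontra : ∀ᵐ x ∂(volume : Measure ℝ), x ∉ S ∩ t n := by
      filter_upwards [this] with x hx
      intro hxmem
      have h0 := hx hxmem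
      have hdx : deriv f x ≠ 0 := hxmem.1.2.2
      have : (f' x).det = deriv f x := ContinuousLinearMap.det_toSpanSingleton (deriv f x)
      rw [this] at h0
      simp only [Pi.zero_apply, ENNReal.ofReal_eq_zero] at h0
      exact absurd h0 (not_le.mpr (abs_pos.mpr hdx))
    have : volume {x | x ∈ S ∩ t n} = 0 := by
      have := hcontra
      rw [ae_iff] at this
      simpa using this
    simpa using this
  have hcover : S ⊆ ⋃ n, S ∩ t n := by
    intro x hx
    obtain ⟨n, hn⟩ := Set.mem_iUnion.mp (t_cover hx)
    exact Set.mem_iUnion.mpr ⟨n, hx, hn⟩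
  refine measure_mono_null hcover ?_
  refine le_zero_iff.mp ((measure_iUnion_le _).trans ?_)
  simp [key]
end

section
/- Let g : ℝ → [0,∞) be lower semicontinuous and bounded. Then the functional I₃ : C([0,T],ℝ) → ℝ defined by I₃(f) = (1/2)∫₀ᵀ g(f(t)) dt is lower semicontinuous with respect to the uniform metric. -/
open MeasureTheory Set
open scoped ENNReal

open Filter Topology in
/-- For a bounded lower semicontinuous `g : ℝ → [0,∞)`, the functional
`I₃(f) = (1/2)∫₀ᵀ g(f(t)) dt` is lower semicontinuous on `C([0,T],ℝ)`
with the sup metric. (Points of `[0,T]` are realized via `projIcc`.) -/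
theorem I3_lowerSemicontinuous
    (T : ℝ) (hT : 0 < T) (g : ℝ → ℝ) (hg : LowerSemicontinuous g)
    (hg0 : ∀ x, 0 ≤ g x) (M : ℝ) (hgM : ∀ x, g x ≤ M) :
    LowerSemicontinuous (fun f : C(Icc (0:ℝ) T, ℝ) =>
      (1/2) * ∫ t in Icc (0:ℝ) T, g (f (projIcc 0 T hT.le t))) := by
  -- the ENNReal-valued version of `g`
  set G : ℝ → ℝ≥0∞ := fun x => ENNReal.ofReal (g x) with hG
  have hGls : LowerSemicontinuous G :=
    ENNReal.continuous_ofReal.comp_lowerSemicontinuous hg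
      (fun a b hab => ENNReal.ofReal_le_ofReal hab)
  have hgmeas : Measurable g := hg.measurable
  set Φ : C(Icc (0:ℝ) T, ℝ) → ℝ≥0∞ :=
    fun f => ∫⁻ t in Icc (0:ℝ) T, G (f (projIcc 0 T hT.le t)) with hΦ
  have hmeas : ∀ f : C(Icc (0:ℝ) T, ℝ),
      Measurable (fun t : ℝ => G (f (projIcc 0 T hT.le t))) := by
    intro f
    exact (ENNReal.measurable_ofReal.comp hgmeas).comp
      (f.continuous.measurable.comp (continuous_projIcc.measurable))
  have hΦtop : ∀ f : C(Icc (0:ℝ) T, ℝ), Φ f ≠ ⊤ := by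
    intro f
    have hle : Φ f ≤ ∫⁻ _ in Icc (0:ℝ) T, ENNReal.ofReal M := by
      refine lintegral_mono fun t => ?_
      exact ENNReal.ofReal_le_ofReal (hgM _)
    refine ne_of_lt (lt_of_le_of_lt hle ?_)
    rw [setLIntegral_const]
    exact ENNReal.mul_lt_top ENNReal.ofReal_lt_top (by
      rw [Real.volume_Icc]; exact ENNReal.ofReal_lt_top)
  -- the functional in terms of Φ
  have hFΦ : ∀ f : C(Icc (0:ℝ) T, ℝ),
      (1/2) * ∫ t in Icc (0:ℝ) T, g (f (projIcc 0 T hT.le t))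
        = (1/2) * (Φ f).toReal := by
    intro f
    congr 1
    rw [hΦ]
    rw [integral_eq_lintegral_of_nonneg_ae]
    · exact Eventually.of_forall fun t => hg0 _
    · exact ((hgmeas.comp
        (f.continuous.measurable.comp continuous_projIcc.measurable))).aestronglyMeasurable
  intro f y hy
  by_contra hcon
  rw [Filter.not_eventually] at hcon
  -- extract a sequence converging to f on which the functional stays ≤ y
  have hseq : ∀ n : ℕ, ∃ f' : C(Icc (0:ℝ) T, ℝ), dist f' f < 1/(n+1) ∧
      (1/2) * ∫ t in Icc (0:ℝ) T, g (f' (projIcc 0 T hT.le t)) ≤ y := by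
    intro n
    have hball : Metric.ball f (1/(n+1)) ∈ 𝓝 f :=
      Metric.ball_mem_nhds f (by positivity)
    rcases ((hcon.and_eventually hball).exists) with ⟨f', hf'1, hf'2⟩
    exact ⟨f', by simpa [dist_comm] using hf'2, le_of_not_gt hf'1⟩
  choose u hu hu2 using hseq
  have hutend : Filter.Tendsto u atTop (𝓝 f) := by
    refine tendsto_iff_dist_tendsto_zero.mpr ?_
    refine squeeze_zero (fun n => dist_nonneg) (fun n => (hu n).le) ?_
    exact tendsto_one_div_add_atTop_nhds_zero_nat
  -- pointwise lower semicontinuity along the sequence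
  have hpt : ∀ s : Icc (0:ℝ) T, G (f s) ≤ liminf (fun n => G (u n s)) atTop := by
    intro s
    have hts : Filter.Tendsto (fun n => u n s) atTop (𝓝 (f s)) :=
      ((continuous_eval_const s).tendsto f).comp hutend
    have h1 : G (f s) ≤ liminf G (𝓝 (f s)) :=
      lowerSemicontinuousAt_iff_le_liminf.mp (hGls (f s))
    refine h1.trans ?_
    have hmap : Filter.map (fun n => u n s) atTop ≤ 𝓝 (f s) := hts
    calc liminf G (𝓝 (f s)) ≤ liminf G (Filter.map (fun n => u n s) atTop) :=
          liminf_le_liminf_of_le hmap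
    _ = liminf (fun n => G (u n s)) atTop := (Filter.liminf_comp G (fun n => u n s) atTop).symm
  -- Fatou
  have hfatou : Φ f ≤ liminf (fun n => Φ (u n)) atTop := by
    calc Φ f ≤ ∫⁻ t in Icc (0:ℝ) T,
          liminf (fun n => G (u n (projIcc 0 T hT.le t))) atTop := by
          exact lintegral_mono fun t => hpt _
    _ ≤ liminf (fun n => Φ (u n)) atTop :=
          lintegral_liminf_le fun n => hmeas (u n)
  -- bound liminf
  have hy0 : 0 ≤ y := by
    refine le_trans ?_ (hu2 0)
    have : 0 ≤ ∫ t in Icc (0:ℝ) T, g (u 0 (projIcc 0 T hT.le t)) :=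
      integral_nonneg fun t => hg0 _
    linarith
  have hbound : ∀ n, Φ (u n) ≤ ENNReal.ofReal (2*y) := by
    intro n
    have := hu2 n
    rw [hFΦ] at this
    have h2 : (Φ (u n)).toReal ≤ 2*y := by linarith
    rw [← ENNReal.ofReal_toReal (hΦtop (u n))]
    exact ENNReal.ofReal_le_ofReal h2
  have hliminf : liminf (fun n => Φ (u n)) atTop ≤ ENNReal.ofReal (2*y) :=
    liminf_le_of_frequently_le' (Frequently.of_forall hbound)
  have hΦfy : Φ f ≤ ENNReal.ofReal (2*y) := hfatou.trans hliminf
  have : (Φ f).toReal ≤ 2*y := by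
    rw [← ENNReal.toReal_ofReal (by linarith : (0:ℝ) ≤ 2*y)]
    exact ENNReal.toReal_mono ENNReal.ofReal_ne_top hΦfy
  have hy2 : y < (1/2) * (Φ f).toReal := by rw [← hFΦ]; exact hy
  linarith
end

section
/- Let W be a standard one-dimensional Brownian motion. Then for every R > 0 and S > 0, limsup_{ε→0} ε² log P(sup_{t∈[0,S]} ε|W_t| > R) ≤ -R²/(2S). -/
open MeasureTheory Filter Topology ProbabilityTheory
open scoped ENNReal NNReal

/-- `W` is a standard one-dimensional Brownian motion on `(Ω, P)`: it starts at `0`,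
has continuous paths, Gaussian increments `W_t - W_s ∼ N(0, t-s)`, and independent
increments over disjoint consecutive intervals. -/
def IsStandardBM {Ω : Type*} [MeasurableSpace Ω] (P : Measure Ω) (W : ℝ → Ω → ℝ) : Prop :=
  (∀ t : ℝ, Measurable (W t)) ∧
  (∀ ω, W 0 ω = 0) ∧
  (∀ ω, Continuous fun t => W t ω) ∧
  (∀ s t : ℝ, 0 ≤ s → s ≤ t →
    Measure.map (fun ω => W t ω - W s ω) P = gaussianReal 0 (Real.toNNReal (t - s))) ∧
  (∀ (n : ℕ) (t : Fin (n + 1) → ℝ), Monotone t → 0 ≤ t 0 →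
    iIndepFun
      (fun i : Fin n => fun ω => W (t i.succ) ω - W (t i.castSucc) ω) P)

open Real

section Aux

lemma gauss_tail (v : ℝ≥0) (hv : v ≠ 0) (a : ℝ) (ha : 0 ≤ a) :
    gaussianReal 0 v {x | a ≤ x} ≤ ENNReal.ofReal (Real.exp (-a^2/(2*v))) := by
  have hvpos : (0:ℝ) < v := lt_of_le_of_ne v.coe_nonneg (by exact_mod_cast hv.symm)
  have key : ∀ x ∈ {x : ℝ | a ≤ x},
      gaussianPDF 0 v x ≤ ENNReal.ofReal (Real.exp (-a^2/(2*v))) * gaussianPDF a v x := by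
    intro x hx
    simp only [Set.mem_setOf_eq] at hx
    rw [gaussianPDF, gaussianPDF, ← ENNReal.ofReal_mul (Real.exp_nonneg _)]
    refine ENNReal.ofReal_le_ofReal ?_
    rw [gaussianPDFReal, gaussianPDFReal]
    rw [mul_left_comm, ← Real.exp_add]
    refine mul_le_mul_of_nonneg_left (Real.exp_le_exp.2 ?_) (by positivity)
    rw [div_add_div _ _ (by positivity) (by positivity), div_le_div_iff₀ (by positivity) (by positivity)]
    nlinarith [mul_nonneg (mul_nonneg ha (sub_nonneg.2 hx)) hvpos.le, sq_nonneg (x - a)]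
  calc gaussianReal 0 v {x | a ≤ x}
      = ∫⁻ x in {x | a ≤ x}, gaussianPDF 0 v x := gaussianReal_apply 0 hv _
    _ ≤ ∫⁻ x in {x | a ≤ x}, ENNReal.ofReal (Real.exp (-a^2/(2*v))) * gaussianPDF a v x :=
        setLIntegral_mono ((measurable_gaussianPDF a v).const_mul _) key
    _ ≤ ∫⁻ x, ENNReal.ofReal (Real.exp (-a^2/(2*v))) * gaussianPDF a v x :=
        setLIntegral_le_lintegral _ _
    _ = ENNReal.ofReal (Real.exp (-a^2/(2*v))) * ∫⁻ x, gaussianPDF a v x :=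
        lintegral_const_mul _ (measurable_gaussianPDF a v)
    _ = ENNReal.ofReal (Real.exp (-a^2/(2*v))) := by
        rw [lintegral_gaussianPDF_eq_one a hv, mul_one]

lemma gauss_map_neg (v : ℝ≥0) :
    (gaussianReal 0 v).map (fun x => -x) = gaussianReal 0 v := by
  have h := gaussianReal_map_const_mul (μ := 0) (v := v) (-1)
  simp only [neg_one_mul, mul_zero] at h
  convert h using 2
  ext
  simp

lemma gauss_half (v : ℝ≥0) : (1:ℝ≥0∞)/2 ≤ gaussianReal 0 v {x | 0 ≤ x} := by
  have hsym : gaussianReal 0 v {x | x ≤ 0} = gaussianReal 0 v {x | 0 ≤ x} := by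
    conv_lhs => rw [← gauss_map_neg v]
    rw [show {x:ℝ | x ≤ 0} = Set.Iic 0 from rfl,
      Measure.map_apply (f := fun x:ℝ => -x) measurable_neg measurableSet_Iic]
    congr 1
    ext x
    simp
  have hunion : (gaussianReal 0 v) {x | x ≤ 0} + gaussianReal 0 v {x | 0 ≤ x} ≥ 1 := by
    have : (1:ℝ≥0∞) = gaussianReal 0 v Set.univ := (measure_univ).symm
    rw [this]
    refine le_trans (measure_mono ?_) (measure_union_le _ _)
    intro x _
    rcases le_total x 0 with h | h
    · exact Or.inl h
    · exact Or.inr h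
  rw [hsym, ← two_mul] at hunion
  rw [ENNReal.div_le_iff_le_mul (Or.inl (by norm_num)) (Or.inl (by norm_num))]
  calc (1:ℝ≥0∞) ≤ 2 * gaussianReal 0 v {x | 0 ≤ x} := hunion
  _ = gaussianReal 0 v {x | 0 ≤ x} * 2 := mul_comm _ _

lemma gauss_pos (v : ℝ≥0) (hv : v ≠ 0) (c : ℝ) : 0 < gaussianReal 0 v (Set.Ioi c) := by
  by_contra h
  push_neg at h
  have h0 : gaussianReal 0 v (Set.Ioi c) = 0 := le_antisymm h zero_le
  have := gaussianReal_absolutelyContinuous' 0 hv h0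
  simp [Real.volume_Ioi] at this

variable {Ω : Type*} [MeasurableSpace Ω]

lemma refl_bound (P : Measure Ω) [IsProbabilityMeasure P]
    (W : ℝ → Ω → ℝ) (hmeas : ∀ t, Measurable (W t)) (h0 : ∀ ω, W 0 ω = 0)
    (hlaw : ∀ s t : ℝ, 0 ≤ s → s ≤ t →
      Measure.map (fun ω => W t ω - W s ω) P = gaussianReal 0 (Real.toNNReal (t - s)))
    (hind : ∀ (n : ℕ) (t : Fin (n + 1) → ℝ), Monotone t → 0 ≤ t 0 →
      iIndepFun
        (fun i : Fin n => fun ω => W (t i.succ) ω - W (t i.castSucc) ω) P)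
    (n : ℕ) (t : Fin (n+1) → ℝ) (ht : Monotone t) (ht0 : t 0 = 0) (a : ℝ) :
    P {ω | ∃ i, a < W (t i) ω} ≤ 2 * P {ω | a ≤ W (t (Fin.last n)) ω} := by
  classical
  set Y : Fin n → Ω → ℝ := fun j ω => W (t j.succ) ω - W (t j.castSucc) ω with hY_def
  have hYmeas : ∀ j, Measurable (Y j) := fun j => (hmeas _).sub (hmeas _)
  have hY : iIndepFun Y P := hind n t ht (ht0 ▸ le_refl (0:ℝ))
  -- telescoping
  have sumX : ∀ (j : Fin (n+1)) (ω : Ω),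
      W (t j) ω = ∑ k ∈ Finset.univ.filter (fun k : Fin n => (k:ℕ) < (j:ℕ)), Y k ω := by
    intro j ω
    obtain ⟨m, hm⟩ := j
    induction m with
    | zero =>
        have he : Finset.univ.filter (fun k : Fin n => (k:ℕ) < 0) = ∅ := by
          ext k; simp
        rw [he]
        have h00 : (⟨0, hm⟩ : Fin (n+1)) = 0 := rfl
        rw [h00, ht0, h0]
        simp
    | succ m ih =>
        have hmn : m < n := by omega
        have hstep : Finset.univ.filter (fun k : Fin n => (k:ℕ) < m+1)
            = insert ⟨m, hmn⟩ (Finset.univ.filter (fun k : Fin n => (k:ℕ) < m)) := by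
          ext k
          simp only [Finset.mem_filter, Finset.mem_univ, true_and, Finset.mem_insert, Fin.ext_iff]
          omega
        rw [hstep, Finset.sum_insert (by simp)]
        rw [← ih (by omega)]
        have h1 : (⟨m, hmn⟩ : Fin n).succ = (⟨m+1, hm⟩ : Fin (n+1)) := rfl
        have h2 : (⟨m, hmn⟩ : Fin n).castSucc = (⟨m, by omega⟩ : Fin (n+1)) := rfl
        simp only [hY_def, h1, h2]
        ring
  set X : Fin (n+1) → Ω → ℝ := fun i ω => W (t i) ω with hX_def
  set A : Fin (n+1) → Set Ω :=
    fun i => {ω | (∀ j, j < i → X j ω ≤ a) ∧ a < X i ω} with hA_def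
  set B : Fin (n+1) → Set Ω := fun i => {ω | 0 ≤ X (Fin.last n) ω - X i ω} with hB_def
  have hAmeas : ∀ i, MeasurableSet (A i) := by
    intro i
    have hrew : A i = (⋂ j ∈ Set.Iio i, {ω | X j ω ≤ a}) ∩ {ω | a < X i ω} := by
      ext ω; simp [hA_def]
    rw [hrew]
    exact (MeasurableSet.biInter (Set.to_countable _)
      (fun j _ => measurableSet_le (hmeas _) measurable_const)).inter
      (measurableSet_lt measurable_const (hmeas _))
  have hBmeas : ∀ i, MeasurableSet (B i) :=
    fun i => measurableSet_le measurable_const ((hmeas _).sub (hmeas _))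
  -- event = union of A i
  have hunion : {ω | ∃ i, a < W (t i) ω} = ⋃ i, A i := by
    ext ω
    simp only [Set.mem_setOf_eq, Set.mem_iUnion]
    constructor
    · rintro ⟨i, hi⟩
      have hne : (Finset.univ.filter (fun i : Fin (n+1) => a < X i ω)).Nonempty :=
        ⟨i, by simp [hX_def, hi]⟩
      set i₀ := (Finset.univ.filter (fun i : Fin (n+1) => a < X i ω)).min' hne with hi₀
      refine ⟨i₀, fun j hj => ?_, ?_⟩
      · by_contra hcon
        push_neg at hcon
        have hjmem : j ∈ Finset.univ.filter (fun i : Fin (n+1) => a < X i ω) := by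
          simp only [Finset.mem_filter, Finset.mem_univ, true_and]
          exact hcon
        have hle : i₀ ≤ j := Finset.min'_le _ _ hjmem
        exact absurd (lt_of_lt_of_le hj hle) (lt_irrefl _)
      · have := (Finset.univ.filter (fun i : Fin (n+1) => a < X i ω)).min'_mem hne
        simpa using this
    · rintro ⟨i, hi⟩
      exact ⟨i, hi.2⟩
  -- disjointness
  have hdisj : Pairwise (Function.onFun Disjoint A) := by
    intro i j hij
    wlog h : i < j generalizing i j
    · exact (this hij.symm (hij.lt_or_gt.resolve_left h)).symm
    refine Set.disjoint_left.2 fun ω hωi hωj => ?_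
    exact absurd hωi.2 (not_lt.2 (hωj.1 i h))
  -- independence
  have hindep : ∀ i, P (A i ∩ B i) = P (A i) * P (B i) := by
    intro i
    set S : Finset (Fin n) := Finset.univ.filter (fun k : Fin n => (k:ℕ) < (i:ℕ)) with hS
    set T : Finset (Fin n) := Finset.univ.filter (fun k : Fin n => ¬ ((k:ℕ) < (i:ℕ))) with hT
    have hST : Disjoint S T := by
      rw [Finset.disjoint_left]
      intro k hk hk'
      simp only [hS, hT, Finset.mem_filter, Finset.mem_univ, true_and] at hk hk'
      omega
    have hIF := hY.indepFun_finset S T hST hYmeas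
    set FS : Ω → (S → ℝ) := fun ω k => Y k ω with hFS
    set FT : Ω → (T → ℝ) := fun ω k => Y k ω with hFT
    set ps : Fin (n+1) → (S → ℝ) → ℝ :=
      fun j y => ∑ k : S, if ((k : Fin n) : ℕ) < (j : ℕ) then y k else 0 with hps
    have hps_meas : ∀ j, Measurable (ps j) := by
      intro j
      refine Finset.measurable_sum _ (fun k _ => ?_)
      by_cases h : ((k : Fin n) : ℕ) < (j : ℕ)
      · simp only [if_pos h]; exact measurable_pi_apply k
      · simp only [if_neg h]; exact measurable_const
    set MS : Set (S → ℝ) := {y | (∀ j, j < i → ps j y ≤ a) ∧ a < ps i y} with hMS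
    have hMS_meas : MeasurableSet MS := by
      have hrew : MS = (⋂ j ∈ Set.Iio i, {y | ps j y ≤ a}) ∩ {y | a < ps i y} := by
        ext y; simp [hMS]
      rw [hrew]
      exact (MeasurableSet.biInter (Set.to_countable _)
        (fun j _ => measurableSet_le (hps_meas _) measurable_const)).inter
        (measurableSet_lt measurable_const (hps_meas _))
    set MT : Set (T → ℝ) := {y | 0 ≤ ∑ k, y k} with hMT
    have hMT_meas : MeasurableSet MT :=
      measurableSet_le measurable_const (Finset.measurable_sum _ fun k _ => measurable_pi_apply k)
    -- ps identity
    have hpsX : ∀ (j : Fin (n+1)), j ≤ i → ∀ ω, ps j (FS ω) = X j ω := by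
      intro j hj ω
      have e1 : ps j (FS ω) = ∑ k ∈ S, (if (k:ℕ) < (j:ℕ) then Y k ω else 0) := by
        rw [hps]
        exact Finset.sum_coe_sort S (fun k => if (k:ℕ) < (j:ℕ) then Y k ω else 0)
      rw [e1, ← Finset.sum_filter]
      have e2 : S.filter (fun k : Fin n => (k:ℕ) < (j:ℕ))
          = Finset.univ.filter (fun k : Fin n => (k:ℕ) < (j:ℕ)) := by
        rw [hS, Finset.filter_filter]
        ext k
        simp only [Finset.mem_filter, Finset.mem_univ, true_and]
        have := Fin.le_iff_val_le_val.1 hj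
        constructor
        · exact fun h => h.2
        · exact fun h => ⟨lt_of_lt_of_le h this, h⟩
      rw [e2, hX_def, ← sumX j ω]
    -- FT sum identity
    have hFTsum : ∀ ω, (∑ k : T, FT ω k) = X (Fin.last n) ω - X i ω := by
      intro ω
      have e1 : (∑ k : T, FT ω k) = ∑ k ∈ T, Y k ω := Finset.sum_coe_sort T (fun k => Y k ω)
      have e2 : ∑ k ∈ S, Y k ω + ∑ k ∈ T, Y k ω = ∑ k, Y k ω :=
        Finset.sum_filter_add_sum_filter_not Finset.univ _ _
      have e3 : X i ω = ∑ k ∈ S, Y k ω := sumX i ω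
      have e4 : X (Fin.last n) ω = ∑ k, Y k ω := by
        rw [hX_def]
        simp only
        rw [sumX (Fin.last n) ω]
        congr 1
        ext k
        simp [Fin.is_lt]
      rw [e1, e3, e4, ← e2]
      ring
    have hA_pre : A i = FS ⁻¹' MS := by
      ext ω
      simp only [hA_def, hMS, Set.mem_setOf_eq, Set.mem_preimage]
      constructor
      · rintro ⟨h1, h2⟩
        exact ⟨fun j hj => by rw [hpsX j hj.le ω]; exact h1 j hj,
          by rw [hpsX i le_rfl ω]; exact h2⟩
      · rintro ⟨h1, h2⟩
        refine ⟨fun j hj => ?_, ?_⟩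
        · have := h1 j hj; rwa [hpsX j hj.le ω] at this
        · have := h2; rwa [hpsX i le_rfl ω] at this
    have hB_pre : B i = FT ⁻¹' MT := by
      ext ω
      simp only [hB_def, hMT, Set.mem_setOf_eq, Set.mem_preimage, hFTsum ω]
    rw [hA_pre, hB_pre]
    exact hIF.measure_inter_preimage_eq_mul MS MT hMS_meas hMT_meas
  -- probability of B i
  have hBhalf : ∀ i, (1:ℝ≥0∞) ≤ 2 * P (B i) := by
    intro i
    have h0i : (0:ℝ) ≤ t i := ht0 ▸ ht (Fin.zero_le i)
    have hil : t i ≤ t (Fin.last n) := ht (Fin.le_last i)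
    have hlawi := hlaw (t i) (t (Fin.last n)) h0i hil
    have hPB : P (B i) = gaussianReal 0 (Real.toNNReal (t (Fin.last n) - t i)) {x | 0 ≤ x} := by
      rw [← hlawi, show {x:ℝ | 0 ≤ x} = Set.Ici 0 from rfl,
        Measure.map_apply (show Measurable (fun ω => W (t (Fin.last n)) ω - W (t i) ω) from (hmeas _).sub (hmeas _)) measurableSet_Ici]
      rfl
    have := gauss_half (Real.toNNReal (t (Fin.last n) - t i))
    rw [← hPB] at this
    calc (1:ℝ≥0∞) = 2 * (1/2) := by
          rw [one_div, ENNReal.mul_inv_cancel (by norm_num) (by norm_num)]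
    _ ≤ 2 * P (B i) := mul_le_mul_right this 2
  -- combine
  have hsub : ∀ i, A i ∩ B i ⊆ {ω | a ≤ W (t (Fin.last n)) ω} := by
    intro i ω hω
    have h1 : a < X i ω := hω.1.2
    have h2 : 0 ≤ X (Fin.last n) ω - X i ω := hω.2
    simp only [Set.mem_setOf_eq]
    have : a < X (Fin.last n) ω := lt_of_lt_of_le h1 (by linarith)
    exact this.le
  calc P {ω | ∃ i, a < W (t i) ω} = P (⋃ i, A i) := by rw [hunion]
    _ = ∑' i, P (A i) := measure_iUnion hdisj hAmeas
    _ ≤ ∑' i, 2 * P (A i ∩ B i) := by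
        refine Summable.tsum_le_tsum (fun i => ?_) ENNReal.summable ENNReal.summable
        calc P (A i) = P (A i) * 1 := (mul_one _).symm
        _ ≤ P (A i) * (2 * P (B i)) := mul_le_mul_right (hBhalf i) _
        _ = 2 * (P (A i) * P (B i)) := by ring
        _ = 2 * P (A i ∩ B i) := by rw [hindep i]
    _ = 2 * ∑' i, P (A i ∩ B i) := ENNReal.tsum_mul_left
    _ = 2 * P (⋃ i, A i ∩ B i) := by
        rw [measure_iUnion (fun i j hij => Disjoint.mono Set.inter_subset_left
          Set.inter_subset_left (hdisj hij)) (fun i => (hAmeas i).inter (hBmeas i))]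
    _ ≤ 2 * P {ω | a ≤ W (t (Fin.last n)) ω} := by
        refine mul_le_mul_right (measure_mono ?_) 2
        exact Set.iUnion_subset hsub

lemma grid_bound (P : Measure Ω) [IsProbabilityMeasure P]
    (W : ℝ → Ω → ℝ) (hmeas : ∀ t, Measurable (W t)) (h0 : ∀ ω, W 0 ω = 0)
    (hlaw : ∀ s t : ℝ, 0 ≤ s → s ≤ t →
      Measure.map (fun ω => W t ω - W s ω) P = gaussianReal 0 (Real.toNNReal (t - s)))
    (hind : ∀ (n : ℕ) (t : Fin (n + 1) → ℝ), Monotone t → 0 ≤ t 0 →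
      iIndepFun
        (fun i : Fin n => fun ω => W (t i.succ) ω - W (t i.castSucc) ω) P)
    (S a : ℝ) (hS : 0 < S) (ha : 0 ≤ a)
    (F : Finset ℝ) (h0F : (0:ℝ) ∈ F) (hSF : S ∈ F) (hF : ∀ x ∈ F, x ∈ Set.Icc (0:ℝ) S) :
    P {ω | ∃ x ∈ F, a < |W x ω|} ≤ 4 * ENNReal.ofReal (Real.exp (-a^2/(2*S))) := by
  classical
  -- the negated BM
  set W' : ℝ → Ω → ℝ := fun t ω => -W t ω with hW'
  have hmeas' : ∀ t, Measurable (W' t) := fun t => (hmeas t).neg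
  have h0' : ∀ ω, W' 0 ω = 0 := fun ω => by simp [hW', h0 ω]
  have hlaw' : ∀ s t : ℝ, 0 ≤ s → s ≤ t →
      Measure.map (fun ω => W' t ω - W' s ω) P = gaussianReal 0 (Real.toNNReal (t - s)) := by
    intro s t hs hst
    have heq : (fun ω => W' t ω - W' s ω) = (fun x : ℝ => -x) ∘ (fun ω => W t ω - W s ω) := by
      funext ω; simp [hW']; ring
    rw [heq, ← Measure.map_map (show Measurable (fun x : ℝ => -x) from measurable_neg) (show Measurable (fun ω => W t ω - W s ω) from (hmeas t).sub (hmeas s)), hlaw s t hs hst,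
      gauss_map_neg]
  have hind' : ∀ (n : ℕ) (t : Fin (n + 1) → ℝ), Monotone t → 0 ≤ t 0 →
      iIndepFun
        (fun i : Fin n => fun ω => W' (t i.succ) ω - W' (t i.castSucc) ω) P := by
    intro n t htm ht0
    have := (hind n t htm ht0).comp (fun _ => fun x : ℝ => -x) (fun _ => measurable_neg)
    convert this using 2 with i
    funext ω
    simp [hW', Function.comp]
    ring
  -- sorted grid
  have hcard : ∃ n, F.card = n + 1 := ⟨F.card - 1, by
    have : 0 < F.card := Finset.card_pos.2 ⟨0, h0F⟩
    omega⟩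
  obtain ⟨n, hn⟩ := hcard
  set e := F.orderIsoOfFin hn with he
  set t : Fin (n+1) → ℝ := fun i => (e i : ℝ) with htdef
  have htmono : Monotone t := fun i j hij => Subtype.coe_le_coe.2 (e.monotone hij)
  have htmem : ∀ i, t i ∈ F := fun i => (e i).2
  have hsurj : ∀ x ∈ F, ∃ i, t i = x := by
    intro x hx
    exact ⟨e.symm ⟨x, hx⟩, by rw [htdef]; simp only [OrderIso.apply_symm_apply]⟩
  have ht0 : t 0 = 0 := by
    obtain ⟨i, hi⟩ := hsurj 0 h0F
    have h1 : t 0 ≤ t i := htmono (Fin.zero_le i)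
    have h2 : 0 ≤ t 0 := (hF _ (htmem 0)).1
    rw [hi] at h1
    linarith
  have htlast : t (Fin.last n) = S := by
    obtain ⟨i, hi⟩ := hsurj S hSF
    have h1 : t i ≤ t (Fin.last n) := htmono (Fin.le_last i)
    have h2 : t (Fin.last n) ≤ S := (hF _ (htmem _)).2
    rw [hi] at h1
    linarith
  -- event inclusion
  have hincl : {ω | ∃ x ∈ F, a < |W x ω|}
      ⊆ {ω | ∃ i, a < W (t i) ω} ∪ {ω | ∃ i, a < W' (t i) ω} := by
    rintro ω ⟨x, hxF, hx⟩
    obtain ⟨i, hi⟩ := hsurj x hxF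
    rcases lt_abs.1 hx with h | h
    · exact Or.inl ⟨i, hi ▸ h⟩
    · exact Or.inr ⟨i, by rw [hW']; simpa [hi] using h⟩
  -- tail bound for W S
  have hvne : Real.toNNReal (S - 0) ≠ 0 := by
    simp only [sub_zero, ne_eq, Real.toNNReal_eq_zero, not_le]
    exact hS
  have hlawS : Measure.map (W S) P = gaussianReal 0 (Real.toNNReal (S - 0)) := by
    rw [← hlaw 0 S le_rfl hS.le]
    congr 1
    funext ω
    rw [h0 ω]
    ring
  have htail : P {ω | a ≤ W S ω} ≤ ENNReal.ofReal (Real.exp (-a^2/(2*S))) := by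
    have : P {ω | a ≤ W S ω} = (Measure.map (W S) P) {x | a ≤ x} := by
      rw [show {x:ℝ | a ≤ x} = Set.Ici a from rfl,
        Measure.map_apply (hmeas S) measurableSet_Ici]
      rfl
    rw [this, hlawS]
    have := gauss_tail (Real.toNNReal (S - 0)) hvne a ha
    rwa [show ((Real.toNNReal (S-0) : ℝ≥0) : ℝ) = S by
      rw [Real.coe_toNNReal _ (by linarith)]; ring] at this
  have hlawS' : Measure.map (W' S) P = gaussianReal 0 (Real.toNNReal (S - 0)) := by
    rw [← hlaw' 0 S le_rfl hS.le]
    congr 1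
    funext ω
    rw [h0' ω]
    ring
  have htail' : P {ω | a ≤ W' S ω} ≤ ENNReal.ofReal (Real.exp (-a^2/(2*S))) := by
    have : P {ω | a ≤ W' S ω} = (Measure.map (W' S) P) {x | a ≤ x} := by
      rw [show {x:ℝ | a ≤ x} = Set.Ici a from rfl,
        Measure.map_apply (hmeas' S) measurableSet_Ici]
      rfl
    rw [this, hlawS']
    have := gauss_tail (Real.toNNReal (S - 0)) hvne a ha
    rwa [show ((Real.toNNReal (S-0) : ℝ≥0) : ℝ) = S by
      rw [Real.coe_toNNReal _ (by linarith)]; ring] at this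
  calc P {ω | ∃ x ∈ F, a < |W x ω|}
      ≤ P ({ω | ∃ i, a < W (t i) ω} ∪ {ω | ∃ i, a < W' (t i) ω}) := measure_mono hincl
    _ ≤ P {ω | ∃ i, a < W (t i) ω} + P {ω | ∃ i, a < W' (t i) ω} := measure_union_le _ _
    _ ≤ 2 * P {ω | a ≤ W (t (Fin.last n)) ω} + 2 * P {ω | a ≤ W' (t (Fin.last n)) ω} :=
        add_le_add (refl_bound P W hmeas h0 hlaw hind n t htmono ht0 a)
          (refl_bound P W' hmeas' h0' hlaw' hind' n t htmono ht0 a)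
    _ ≤ 2 * ENNReal.ofReal (Real.exp (-a^2/(2*S))) + 2 * ENNReal.ofReal (Real.exp (-a^2/(2*S))) := by
        rw [htlast]
        exact add_le_add (mul_le_mul_right htail 2) (mul_le_mul_right htail' 2)
    _ = 4 * ENNReal.ofReal (Real.exp (-a^2/(2*S))) := by ring

end Aux

set_option maxHeartbeats 1000000 in
/-- Schilder-type upper bound for the running maximum of Brownian motion:
`limsup_{ε→0} ε² log P(sup_{[0,S]} ε|W_t| > R) ≤ -R²/(2S)`. -/
theorem bm_sup_upper_bound
    {Ω : Type*} [MeasurableSpace Ω] (P : Measure Ω) [IsProbabilityMeasure P]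
    (W : ℝ → Ω → ℝ) (hW : IsStandardBM P W) (R S : ℝ) (hR : 0 < R) (hS : 0 < S) :
    limsup (fun ε =>
        ((ε^2 * Real.log ((P {ω | ∃ t ∈ Set.Icc (0:ℝ) S, R < ε * |W t ω|}).toReal) : ℝ)
          : EReal)) (𝓝[>] (0:ℝ)) ≤ ((-(R^2 / (2*S)) : ℝ) : EReal) := by
  classical
  obtain ⟨hmeas, h0, hcont, hlaw, hind⟩ := hW
  have hvne : Real.toNNReal (S - 0) ≠ 0 := by
    simp only [sub_zero, ne_eq, Real.toNNReal_eq_zero, not_le]; exact hS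
  have hlawS : Measure.map (W S) P = gaussianReal 0 (Real.toNNReal (S - 0)) := by
    rw [← hlaw 0 S le_rfl hS.le]
    congr 1
    funext ω
    rw [h0 ω]; ring
  obtain ⟨d, hdsurj⟩ : ∃ d : ℕ → ℚ, Function.Surjective d :=
    ⟨(Denumerable.eqv ℚ).symm, (Denumerable.eqv ℚ).symm.surjective⟩
  -- the key per-ε bound
  have key : ∀ ε : ℝ, 0 < ε →
      P {ω | ∃ t ∈ Set.Icc (0:ℝ) S, R < ε * |W t ω|}
        ≤ 4 * ENNReal.ofReal (Real.exp (-(R/ε)^2/(2*S))) := by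
    intro ε hε
    set a : ℝ := R / ε with hadef
    have habs : ∀ (x : ℝ) (ω : Ω), (R < ε * |W x ω|) ↔ a < |W x ω| := by
      intro x ω
      rw [hadef, div_lt_iff₀ hε]
      constructor <;> intro h <;> linarith [mul_comm ε (|W x ω|)]
    set C : ℕ → Set Ω := fun k =>
      if ((d k : ℝ)) ∈ Set.Icc (0:ℝ) S then {ω | a < |W ((d k : ℝ)) ω|} else ∅ with hC
    have hEeq : {ω | ∃ t ∈ Set.Icc (0:ℝ) S, R < ε * |W t ω|} = ⋃ k, C k := by
      ext ω
      simp only [Set.mem_setOf_eq, Set.mem_iUnion]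
      constructor
      · rintro ⟨t, htI, htR⟩
        have htU : a < |W t ω| := (habs t ω).1 htR
        have hUopen : IsOpen {s : ℝ | a < |W s ω|} :=
          isOpen_lt continuous_const (hcont ω).abs
        obtain ⟨δ, hδ, hball⟩ := Metric.isOpen_iff.1 hUopen t htU
        have hq : ∃ q : ℚ, (q:ℝ) ∈ Set.Icc (0:ℝ) S ∧ a < |W (q:ℝ) ω| := by
          rcases eq_or_lt_of_le htI.1 with h0t | h0t
          · -- t = 0
            obtain ⟨q, hq1, hq2⟩ := exists_rat_btwn (show (0:ℝ) < min δ S from lt_min hδ hS)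
            refine ⟨q, ⟨hq1.le, hq2.le.trans (min_le_right _ _)⟩, ?_⟩
            have hd : dist (q:ℝ) t < δ := by
              rw [Real.dist_eq, ← h0t, sub_zero, abs_of_pos hq1]
              exact lt_of_lt_of_le hq2 (min_le_left _ _)
            exact hball hd
          · -- 0 < t
            obtain ⟨q, hq1, hq2⟩ := exists_rat_btwn (show max 0 (t - δ) < t by
              rw [max_lt_iff]; exact ⟨h0t, by linarith⟩)
            have hq0 : (0:ℝ) < q := lt_of_le_of_lt (le_max_left _ _) hq1
            refine ⟨q, ⟨hq0.le, hq2.le.trans htI.2⟩, ?_⟩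
            have hd : dist (q:ℝ) t < δ := by
              rw [Real.dist_eq, abs_of_nonpos (by linarith)]
              have := lt_of_le_of_lt (le_max_right 0 (t - δ)) hq1
              linarith
            exact hball hd
        obtain ⟨q, hqI, hqW⟩ := hq
        obtain ⟨k, hdq⟩ := hdsurj q
        refine ⟨k, ?_⟩
        rw [hC]
        simp only [hdq, if_pos hqI]
        exact hqW
      · rintro ⟨k, hk⟩
        simp only [hC] at hk
        by_cases hcond : ((d k : ℝ)) ∈ Set.Icc (0:ℝ) S
        · rw [if_pos hcond] at hk
          exact ⟨(d k : ℝ), hcond, (habs _ ω).2 hk⟩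
        · rw [if_neg hcond] at hk
          exact absurd hk (Set.notMem_empty ω)
    rw [hEeq, measure_iUnion_eq_iSup_accumulate]
    refine iSup_le fun n => ?_
    -- finite grid
    set F : Finset ℝ := insert 0 (insert S
      (((Finset.range (n+1)).filter (fun k => ((d k : ℝ)) ∈ Set.Icc (0:ℝ) S)).image
        (fun k => ((d k : ℝ))))) with hF
    have h0F : (0:ℝ) ∈ F := Finset.mem_insert_self _ _
    have hSF : S ∈ F := Finset.mem_insert_of_mem (Finset.mem_insert_self _ _)
    have hFmem : ∀ x ∈ F, x ∈ Set.Icc (0:ℝ) S := by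
      intro x hx
      rw [hF] at hx
      rcases Finset.mem_insert.1 hx with h | hx
      · rw [h]; exact ⟨le_rfl, hS.le⟩
      rcases Finset.mem_insert.1 hx with h | hx
      · rw [h]; exact ⟨hS.le, le_rfl⟩
      obtain ⟨k, hk, hkx⟩ := Finset.mem_image.1 hx
      rw [← hkx]
      exact (Finset.mem_filter.1 hk).2
    have hacc : Set.accumulate C n ⊆ {ω | ∃ x ∈ F, a < |W x ω|} := by
      intro ω hω
      rw [Set.accumulate_def] at hω
      simp only [Set.mem_iUnion] at hω
      obtain ⟨k, hkn, hk⟩ := hω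
      simp only [hC] at hk
      by_cases hcond : ((d k : ℝ)) ∈ Set.Icc (0:ℝ) S
      · rw [if_pos hcond] at hk
        refine ⟨(d k : ℝ), ?_, hk⟩
        refine Finset.mem_insert_of_mem (Finset.mem_insert_of_mem ?_)
        exact Finset.mem_image.2 ⟨k, Finset.mem_filter.2
          ⟨Finset.mem_range.2 (by omega), hcond⟩, rfl⟩
      · rw [if_neg hcond] at hk
        exact absurd hk (Set.notMem_empty ω)
    refine le_trans (measure_mono hacc) ?_
    exact grid_bound P W hmeas h0 hlaw hind S a hS (by positivity) F h0F hSF hFmem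
  -- positivity
  have pos : ∀ ε : ℝ, 0 < ε → 0 < P {ω | ∃ t ∈ Set.Icc (0:ℝ) S, R < ε * |W t ω|} := by
    intro ε hε
    set a : ℝ := R / ε with hadef
    have hsub : (W S) ⁻¹' (Set.Ioi a) ⊆ {ω | ∃ t ∈ Set.Icc (0:ℝ) S, R < ε * |W t ω|} := by
      intro ω hω
      simp only [Set.mem_preimage, Set.mem_Ioi] at hω
      refine ⟨S, ⟨hS.le, le_rfl⟩, ?_⟩
      have h1 : a < |W S ω| := lt_of_lt_of_le hω (le_abs_self _)
      rw [hadef, div_lt_iff₀ hε] at h1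
      linarith [mul_comm (|W S ω|) ε]
    refine lt_of_lt_of_le ?_ (measure_mono hsub)
    have hPpre : P ((W S) ⁻¹' (Set.Ioi a)) = gaussianReal 0 (Real.toNNReal (S - 0)) (Set.Ioi a) := by
      rw [← hlawS, Measure.map_apply (hmeas S) measurableSet_Ioi]
    rw [hPpre]
    exact gauss_pos _ hvne a
  -- pointwise log bound
  have hpoint : ∀ ε : ℝ, 0 < ε →
      ε^2 * Real.log ((P {ω | ∃ t ∈ Set.Icc (0:ℝ) S, R < ε * |W t ω|}).toReal)
        ≤ ε^2 * Real.log 4 - R^2/(2*S) := by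
    intro ε hε
    set p : ℝ := (P {ω | ∃ t ∈ Set.Icc (0:ℝ) S, R < ε * |W t ω|}).toReal with hp
    have hppos : 0 < p :=
      ENNReal.toReal_pos (pos ε hε).ne' (measure_ne_top P _)
    have hple : p ≤ 4 * Real.exp (-(R/ε)^2/(2*S)) := by
      refine ENNReal.toReal_le_of_le_ofReal (by positivity) ?_
      have h4 : ENNReal.ofReal (4 * Real.exp (-(R/ε)^2/(2*S)))
          = 4 * ENNReal.ofReal (Real.exp (-(R/ε)^2/(2*S))) := by
        rw [ENNReal.ofReal_mul (by norm_num)]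
        norm_num
      rw [h4]
      exact key ε hε
    have hlog : Real.log p ≤ Real.log 4 + (-(R/ε)^2/(2*S)) := by
      refine le_trans (Real.log_le_log hppos hple) ?_
      rw [Real.log_mul (by norm_num) (Real.exp_ne_zero _), Real.log_exp]
    have heq : ε^2 * (Real.log 4 + (-(R/ε)^2/(2*S))) = ε^2 * Real.log 4 - R^2/(2*S) := by
      field_simp
      ring
    calc ε^2 * Real.log p ≤ ε^2 * (Real.log 4 + (-(R/ε)^2/(2*S))) :=
          mul_le_mul_of_nonneg_left hlog (sq_nonneg ε)
      _ = ε^2 * Real.log 4 - R^2/(2*S) := heq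
  -- limsup
  have hev : ∀ᶠ ε in 𝓝[>] (0:ℝ),
      ((ε^2 * Real.log ((P {ω | ∃ t ∈ Set.Icc (0:ℝ) S, R < ε * |W t ω|}).toReal) : ℝ) : EReal)
        ≤ ((ε^2 * Real.log 4 - R^2/(2*S) : ℝ) : EReal) := by
    filter_upwards [self_mem_nhdsWithin] with ε hε
    exact EReal.coe_le_coe_iff.2 (hpoint ε hε)
  have htends : Tendsto (fun ε : ℝ => ((ε^2 * Real.log 4 - R^2/(2*S) : ℝ) : EReal))
      (𝓝[>] (0:ℝ)) (𝓝 ((-(R^2/(2*S)) : ℝ) : EReal)) := by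
    rw [EReal.tendsto_coe]
    have hcont' : Continuous (fun ε : ℝ => ε^2 * Real.log 4 - R^2/(2*S)) := by
      continuity
    have := hcont'.tendsto 0
    simp only [zero_pow, ne_eq, OfNat.ofNat_ne_zero, not_false_eq_true, zero_mul, zero_sub] at this
    exact this.mono_left nhdsWithin_le_nhds
  calc limsup (fun ε =>
        ((ε^2 * Real.log ((P {ω | ∃ t ∈ Set.Icc (0:ℝ) S, R < ε * |W t ω|}).toReal) : ℝ)
          : EReal)) (𝓝[>] (0:ℝ))
      ≤ limsup (fun ε : ℝ => ((ε^2 * Real.log 4 - R^2/(2*S) : ℝ) : EReal)) (𝓝[>] (0:ℝ)) :=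
        limsup_le_limsup hev
    _ = ((-(R^2/(2*S)) : ℝ) : EReal) := htends.limsup_eq
end

section
/- Let a, σ : ℝ → ℝ with σ > 0, and suppose both have left and right limits at every point. Define the modified functions ā, σ̄ by: if a(x-) ≥ 0 and a(x+) ≤ 0 then ā(x) = 0 and σ̄(x) = σ(x); otherwise (ā(x), σ̄(x)) equals either (a(x-), σ(x-)) or (a(x+), σ(x+)), chosen so that ā(x)²/σ̄(x)² = min(a(x-)²/σ(x-)², a(x+)²/σ(x+)²). Then the function B̄(x) = ā(x)²/σ̄(x)² is lower semicontinuous on ℝ. -/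
open Topology

private lemma exists_eps_aux {A S y : ℝ} (hy : y < A^2 / S^2) (hS : S ≠ 0) :
    ∃ ε > 0, ∀ t s : ℝ, |t - A| ≤ ε → |s - S| ≤ ε → y < t^2 / s^2 := by
  have hcont : ContinuousAt (fun p : ℝ × ℝ => p.1^2 / p.2^2) (A, S) :=
    ContinuousAt.div ((continuous_fst.pow 2).continuousAt)
      ((continuous_snd.pow 2).continuousAt) (pow_ne_zero 2 hS)
  have h1 : ∀ᶠ p : ℝ × ℝ in 𝓝 (A, S), y < p.1^2 / p.2^2 := hcont (Ioi_mem_nhds hy)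
  rw [Metric.eventually_nhds_iff] at h1
  obtain ⟨ε, hε, hball⟩ := h1
  refine ⟨ε/2, by positivity, fun t s ht hs => ?_⟩
  have hd : dist ((t, s) : ℝ × ℝ) (A, S) < ε := by
    rw [Prod.dist_eq]
    refine max_lt ?_ ?_ <;> rw [Real.dist_eq] <;> [skip; skip] <;> linarith
  exact hball hd

private lemma nested_left {g gL gR : ℝ → ℝ}
    (hgL : ∀ z, Filter.Tendsto g (𝓝[<] z) (𝓝 (gL z)))
    (hgR : ∀ z, Filter.Tendsto g (𝓝[>] z) (𝓝 (gR z)))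
    {x A ε : ℝ} (hε : 0 < ε) (h : Filter.Tendsto g (𝓝[<] x) (𝓝 A)) :
    ∀ᶠ z in 𝓝[<] x, |gL z - A| ≤ ε ∧ |gR z - A| ≤ ε := by
  have h1 : ∀ᶠ w in 𝓝[<] x, |g w - A| < ε := by
    filter_upwards [Metric.tendsto_nhds.mp h ε hε] with w hw
    rwa [Real.dist_eq] at hw
  obtain ⟨b, hb, hbs⟩ := (nhdsLT_basis x).eventually_iff.mp h1
  filter_upwards [Ioo_mem_nhdsLT hb] with z hz
  constructor
  · refine le_of_tendsto (((hgL z).sub_const A).abs) ?_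
    filter_upwards [Ioo_mem_nhdsLT hz.1] with w hw
    exact (hbs ⟨hw.1, hw.2.trans hz.2⟩).le
  · refine le_of_tendsto (((hgR z).sub_const A).abs) ?_
    filter_upwards [Ioo_mem_nhdsGT hz.2] with w hw
    exact (hbs ⟨hz.1.trans hw.1, hw.2⟩).le

private lemma nested_right {g gL gR : ℝ → ℝ}
    (hgL : ∀ z, Filter.Tendsto g (𝓝[<] z) (𝓝 (gL z)))
    (hgR : ∀ z, Filter.Tendsto g (𝓝[>] z) (𝓝 (gR z)))
    {x A ε : ℝ} (hε : 0 < ε) (h : Filter.Tendsto g (𝓝[>] x) (𝓝 A)) :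
    ∀ᶠ z in 𝓝[>] x, |gL z - A| ≤ ε ∧ |gR z - A| ≤ ε := by
  have h1 : ∀ᶠ w in 𝓝[>] x, |g w - A| < ε := by
    filter_upwards [Metric.tendsto_nhds.mp h ε hε] with w hw
    rwa [Real.dist_eq] at hw
  obtain ⟨b, hb, hbs⟩ := (nhdsGT_basis x).eventually_iff.mp h1
  filter_upwards [Ioo_mem_nhdsGT hb] with z hz
  constructor
  · refine le_of_tendsto (((hgL z).sub_const A).abs) ?_
    filter_upwards [Ioo_mem_nhdsLT hz.1] with w hw
    exact (hbs ⟨hw.1, hw.2.trans hz.2⟩).le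
  · refine le_of_tendsto (((hgR z).sub_const A).abs) ?_
    filter_upwards [Ioo_mem_nhdsGT hz.2] with w hw
    exact (hbs ⟨hz.1.trans hw.1, hw.2⟩).le

private lemma side_key {c y A S : ℝ} (hc : 0 < c)
    {aL aR sL sR abar sbar : ℝ → ℝ}
    (hmod : ∀ x,
      ((0 ≤ aL x ∧ aR x ≤ 0) → abar x = 0 ∧ True) ∧
      (¬(0 ≤ aL x ∧ aR x ≤ 0) →
        (abar x)^2 / (sbar x)^2 = min ((aL x)^2 / (sL x)^2) ((aR x)^2 / (sR x)^2)))
    {l : Filter ℝ}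
    (hA : ∀ ε > 0, ∀ᶠ z in l, |aL z - A| ≤ ε ∧ |aR z - A| ≤ ε)
    (hS : ∀ ε > 0, ∀ᶠ z in l, |sL z - S| ≤ ε ∧ |sR z - S| ≤ ε)
    (hy : y < A^2 / S^2) (hSc : c ≤ S) :
    ∀ᶠ z in l, y < (abar z)^2 / (sbar z)^2 := by
  have hS0 : S ≠ 0 := (hc.trans_le hSc).ne'
  obtain ⟨ε, hε, hεP⟩ := exists_eps_aux hy hS0
  rcases lt_or_ge y 0 with hy0 | hy0
  · filter_upwards [hA ε hε, hS ε hε] with z hz1 hz2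
    by_cases hdz : 0 ≤ aL z ∧ aR z ≤ 0
    · rw [((hmod z).1 hdz).1]
      simpa using hy0
    · rw [(hmod z).2 hdz]
      exact lt_min (hεP _ _ hz1.1 hz2.1) (hεP _ _ hz1.2 hz2.2)
  · have hA0 : A ≠ 0 := by
      intro h
      rw [h] at hy
      simp at hy
      linarith
    have hA2 : 0 < |A| / 2 := by
      have := abs_pos.mpr hA0
      linarith
    have hε'pos : 0 < min ε (|A|/2) := lt_min hε hA2
    filter_upwards [hA _ hε'pos, hS _ hε'pos] with z hz1 hz2
    by_cases hdz : 0 ≤ aL z ∧ aR z ≤ 0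
    · exfalso
      have l1 := abs_le.mp hz1.1
      have l2 := abs_le.mp hz1.2
      have e1 : min ε (|A|/2) ≤ |A|/2 := min_le_right _ _
      have habs : |A| ≤ |A|/2 :=
        abs_le.mpr ⟨by linarith [hdz.1], by linarith [hdz.2]⟩
      exact hA0 (abs_eq_zero.mp (le_antisymm (by linarith) (abs_nonneg A)))
    · have e2 : min ε (|A|/2) ≤ ε := min_le_left _ _
      rw [(hmod z).2 hdz]
      exact lt_min (hεP _ _ (hz1.1.trans e2) (hz2.1.trans e2))
        (hεP _ _ (hz1.2.trans e2) (hz2.2.trans e2))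

/-- Lower semicontinuity of `B̄ = ā²/σ̄²` for the modified coefficients `ā, σ̄`:
`a, σ` have one-sided limits `aL, aR, sL, sR` everywhere, `σ ≥ c > 0`, and at each `x`
either (`a(x-) ≥ 0 ≥ a(x+)` and `ā(x) = 0`, `σ̄(x) = σ(x)`), or `(ā(x), σ̄(x))` is one
of the one-sided pairs chosen so that `ā(x)²/σ̄(x)² = min(a(x-)²/σ(x-)², a(x+)²/σ(x+)²)`. -/
theorem modified_rate_lowerSemicontinuous
    (a σ : ℝ → ℝ) (c : ℝ) (hc : 0 < c) (hσ : ∀ x, c ≤ σ x)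
    (aL aR sL sR : ℝ → ℝ)
    (haL : ∀ x, Filter.Tendsto a (𝓝[<] x) (𝓝 (aL x)))
    (haR : ∀ x, Filter.Tendsto a (𝓝[>] x) (𝓝 (aR x)))
    (hsL : ∀ x, Filter.Tendsto σ (𝓝[<] x) (𝓝 (sL x)))
    (hsR : ∀ x, Filter.Tendsto σ (𝓝[>] x) (𝓝 (sR x)))
    (abar sbar : ℝ → ℝ)
    (hmod : ∀ x,
      ((0 ≤ aL x ∧ aR x ≤ 0) → abar x = 0 ∧ sbar x = σ x) ∧
      (¬(0 ≤ aL x ∧ aR x ≤ 0) →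
        ((abar x = aL x ∧ sbar x = sL x) ∨ (abar x = aR x ∧ sbar x = sR x)) ∧
        (abar x)^2 / (sbar x)^2 = min ((aL x)^2 / (sL x)^2) ((aR x)^2 / (sR x)^2))) :
    LowerSemicontinuous (fun x => (abar x)^2 / (sbar x)^2) := by
  have hmod' : ∀ x,
      ((0 ≤ aL x ∧ aR x ≤ 0) → abar x = 0 ∧ True) ∧
      (¬(0 ≤ aL x ∧ aR x ≤ 0) →
        (abar x)^2 / (sbar x)^2 = min ((aL x)^2 / (sL x)^2) ((aR x)^2 / (sR x)^2)) :=
    fun x => ⟨fun h => ⟨((hmod x).1 h).1, trivial⟩, fun h => ((hmod x).2 h).2⟩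
  have hsLc : ∀ z, c ≤ sL z := fun z =>
    ge_of_tendsto (hsL z) (Filter.Eventually.of_forall fun w => hσ w)
  have hsRc : ∀ z, c ≤ sR z := fun z =>
    ge_of_tendsto (hsR z) (Filter.Eventually.of_forall fun w => hσ w)
  intro x y hy
  have hy' : y < (abar x)^2 / (sbar x)^2 := hy
  by_cases hdeg : 0 ≤ aL x ∧ aR x ≤ 0
  · have h0 := ((hmod x).1 hdeg).1
    rw [h0] at hy'
    have hy0 : y < 0 := by simpa using hy'
    exact Filter.Eventually.of_forall fun z =>
      hy0.trans_le (div_nonneg (sq_nonneg _) (sq_nonneg _))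
  · have hmin := ((hmod x).2 hdeg).2
    rw [hmin] at hy'
    have hleft : ∀ᶠ z in 𝓝[<] x, y < (abar z)^2 / (sbar z)^2 :=
      side_key hc hmod'
        (fun ε hε => nested_left haL haR hε (haL x))
        (fun ε hε => nested_left hsL hsR hε (hsL x))
        (hy'.trans_le (min_le_left _ _)) (hsLc x)
    have hright : ∀ᶠ z in 𝓝[>] x, y < (abar z)^2 / (sbar z)^2 :=
      side_key hc hmod'
        (fun ε hε => nested_right haL haR hε (haR x))
        (fun ε hε => nested_right hsL hsR hε (hsR x))
        (hy'.trans_le (min_le_right _ _)) (hsRc x)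
    have hco : (𝓝 x : Filter ℝ) = 𝓝[<] x ⊔ 𝓝[>] x ⊔ pure x := by
      have h1 : (𝓝[≥] x : Filter ℝ) = 𝓝[>] x ⊔ pure x := by
        rw [← Set.Ioi_union_left, nhdsWithin_union, nhdsWithin_singleton]
      rw [← nhdsLT_sup_nhdsGE x, h1, sup_assoc]
    rw [hco, Filter.eventually_sup, Filter.eventually_sup]
    refine ⟨⟨hleft, hright⟩, ?_⟩
    simpa [hmin] using hy'
end
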